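/- Let n ≥ 2 and m ≥ 1 be integers and let Ω ⊆ (0,∞) × (0,∞) be an open set. Let U : ℝ × ℝ → ℝ be infinitely differentiable on a neighborhood of Ω and satisfy, on Ω: (𝒟_{m,s} U)(s,r) = (𝒟_{0,r} U)(s,r), where 𝒟_{m,s} acts in the first variable and 𝒟_{0,r} in the second. Let V(s,r) = (Q_{m,s} U)(s,r) be obtained by applying the operator Q_m = Γ_1 ∘ ⋯ ∘ Γ_m in the variable s. Then on Ω: (𝒟_{0,s} V)(s,r) = (𝒟_{0,r} V)(s,r). -/

import Mathlib

open Real Filter Set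
open scoped ContDiff Topology

/-- The second-order operator `𝒟_k f (s) = f''(s) + (n-1)·coth(s)·f'(s)
    - (k(k+n-2)/sinh²(s))·f(s)`. -/
noncomputable def Dop (n k : ℤ) (f : ℝ → ℝ) : ℝ → ℝ := fun s =>
  deriv (deriv f) s + ((n : ℝ) - 1) * (Real.cosh s / Real.sinh s) * deriv f s
    - ((k : ℝ) * ((k : ℝ) + (n : ℝ) - 2) / (Real.sinh s) ^ 2) * f s

/-- The first-order operator `Γ_k f (s) = f'(s) + (n+k-2)·coth(s)·f(s)`. -/
noncomputable def Gop (n k : ℤ) (f : ℝ → ℝ) : ℝ → ℝ := fun s =>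
  deriv f s + ((n : ℝ) + (k : ℝ) - 2) * (Real.cosh s / Real.sinh s) * f s

/-- `Q_m = Γ_1 ∘ Γ_2 ∘ ⋯ ∘ Γ_m` (with `Γ_m` applied first). -/
noncomputable def Qop (n : ℤ) : ℕ → (ℝ → ℝ) → (ℝ → ℝ)
  | 0 => id
  | m + 1 => fun f => Qop n m (Gop n ((m : ℤ) + 1) f)


lemma sh_ne {s : ℝ} (hs : s ≠ 0) : Real.sinh s ≠ 0 := by
  simpa [Real.sinh_eq_zero] using hs

lemma one_le_inf : (1 : WithTop ℕ∞) ≤ ∞ := by exact_mod_cast le_top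
lemma two_le_inf : (2 : WithTop ℕ∞) ≤ ∞ := by
  rw [show ((2 : WithTop ℕ∞)) = ((2 : ℕ∞) : WithTop ℕ∞) by rfl]
  exact WithTop.coe_le_coe.mpr le_top

lemma hasDerivAt_coth {s : ℝ} (hs : s ≠ 0) :
    HasDerivAt (fun x => Real.cosh x / Real.sinh x) (-(1 / Real.sinh s ^ 2)) s := by
  have h := (Real.hasDerivAt_cosh s).div (Real.hasDerivAt_sinh s) (sh_ne hs)
  refine h.congr_deriv ?_
  rw [show Real.sinh s * Real.sinh s - Real.cosh s * Real.cosh s = -1 by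
    nlinarith [Real.cosh_sq s]]
  ring

lemma hasDerivAt_invsq (c : ℝ) {s : ℝ} (hs : s ≠ 0) :
    HasDerivAt (fun x => c / Real.sinh x ^ 2) (-(2 * c * Real.cosh s / Real.sinh s ^ 3)) s := by
  have hpow := (Real.hasDerivAt_sinh s).pow 2
  have h := (hasDerivAt_const s c).div hpow (pow_ne_zero 2 (sh_ne hs))
  refine h.congr_deriv ?_
  simp only [Pi.pow_apply]
  field_simp
  ring

lemma derivAt1 {f : ℝ → ℝ} {S : Set ℝ} (hS : IsOpen S) (hf : ContDiffOn ℝ ∞ f S)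
    {x : ℝ} (hx : x ∈ S) : HasDerivAt f (deriv f x) x :=
  ((hf.contDiffAt (hS.mem_nhds hx)).differentiableAt (by simp)).hasDerivAt

lemma derivCD {f : ℝ → ℝ} {S : Set ℝ} (hS : IsOpen S) (hf : ContDiffOn ℝ ∞ f S) :
    ContDiffOn ℝ ∞ (deriv f) S := ((contDiffOn_infty_iff_deriv_of_isOpen hS).1 hf).2


lemma comm1 (n k : ℤ) {f : ℝ → ℝ} {S : Set ℝ} (hSo : IsOpen S) (hS0 : ∀ x ∈ S, x ≠ 0)
    (hf : ContDiffOn ℝ ∞ f S) {s : ℝ} (hs : s ∈ S) :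
    Gop n k (Dop n k f) s = Dop n (k - 1) (Gop n k f) s := by
  have hf1 : ContDiffOn ℝ ∞ (deriv f) S := derivCD hSo hf
  have hf2 : ContDiffOn ℝ ∞ (deriv (deriv f)) S := derivCD hSo hf1
  have hss := hS0 s hs
  set a : ℝ := (n : ℝ) + (k : ℝ) - 2 with ha
  -- first derivative of `Gop n k f`, as a function E on S
  set E : ℝ → ℝ := fun x => deriv (deriv f) x
      + a * (-(1 / Real.sinh x ^ 2) * f x + Real.cosh x / Real.sinh x * deriv f x) with hE
  have hGop : ∀ x ∈ S, HasDerivAt (Gop n k f) (E x) x := by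
    intro x hx
    have h0 := derivAt1 hSo hf hx
    have h1 := derivAt1 hSo hf1 hx
    have hc := hasDerivAt_coth (hS0 x hx)
    have hm := (hc.const_mul a).mul h0
    have := h1.add hm
    have heq : HasDerivAt (fun y => deriv f y
        + a * (Real.cosh y / Real.sinh y) * f y) (E x) x := by
      refine this.congr_deriv ?_
      rw [hE]; ring
    exact heq
  have hderivGop : ∀ x ∈ S, deriv (Gop n k f) x = E x := fun x hx => (hGop x hx).deriv
  -- second derivative of Gop n k f at s
  have h0 := derivAt1 hSo hf hs
  have h1 := derivAt1 hSo hf1 hs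
  have h2 := derivAt1 hSo hf2 hs
  have hc := hasDerivAt_coth hss
  have hneg := (hasDerivAt_invsq 1 hss).neg
  have hE' := h2.add ((((hneg.mul h0).add (hc.mul h1)).const_mul a))
  have hdd : deriv (deriv (Gop n k f)) s = deriv E s :=
    Filter.EventuallyEq.deriv_eq
      (Filter.eventuallyEq_of_mem (hSo.mem_nhds hs) hderivGop)
  -- derivative of Dop n k f at s
  have hD := (h2.add ((hc.const_mul ((n : ℝ) - 1)).mul h1)).sub
      ((hasDerivAt_invsq ((k : ℝ) * ((k : ℝ) + (n : ℝ) - 2)) hss).mul h0)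
  have hDop : HasDerivAt (Dop n k f) _ s := hD
  -- now compute both sides
  have lhs_eq : Gop n k (Dop n k f) s = deriv (Dop n k f) s
      + a * (Real.cosh s / Real.sinh s) * (Dop n k f s) := rfl
  have rhs_eq : Dop n (k - 1) (Gop n k f) s = deriv (deriv (Gop n k f)) s
      + ((n : ℝ) - 1) * (Real.cosh s / Real.sinh s) * deriv (Gop n k f) s
      - (((k : ℝ) - 1) * (((k : ℝ) - 1) + (n : ℝ) - 2) / (Real.sinh s) ^ 2)
        * (Gop n k f s) := by
    simp only [Dop]; push_cast; ring_nf
  rw [lhs_eq, rhs_eq, hDop.deriv, hdd, (show HasDerivAt E _ s from hE').deriv, hderivGop s hs]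
  simp only [Gop, Dop, hE, Pi.neg_apply]
  have hsh := sh_ne hss
  field_simp
  ring


section PD
variable {F : Type*} [NormedAddCommGroup F] [NormedSpace ℝ F]

noncomputable def P1 (f : ℝ × ℝ → F) : ℝ × ℝ → F := fun p => deriv (fun σ => f (σ, p.2)) p.1
noncomputable def P2 (f : ℝ × ℝ → F) : ℝ × ℝ → F := fun p => deriv (fun ρ => f (p.1, ρ)) p.2

lemma hasDerivAt_slice1 {f : ℝ × ℝ → F} {s r : ℝ} (hf : DifferentiableAt ℝ f (s, r)) :
    HasDerivAt (fun σ => f (σ, r)) (fderiv ℝ f (s, r) (1, 0)) s := by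
  have h1 : HasDerivAt (fun σ : ℝ => (σ, r)) ((1 : ℝ), (0 : ℝ)) s :=
    (hasDerivAt_id s).prodMk (hasDerivAt_const s r)
  simpa [Function.comp_def] using hf.hasFDerivAt.comp_hasDerivAt s h1

lemma hasDerivAt_slice2 {f : ℝ × ℝ → F} {s r : ℝ} (hf : DifferentiableAt ℝ f (s, r)) :
    HasDerivAt (fun ρ => f (s, ρ)) (fderiv ℝ f (s, r) (0, 1)) r := by
  have h1 : HasDerivAt (fun ρ : ℝ => (s, ρ)) ((0 : ℝ), (1 : ℝ)) r :=
    (hasDerivAt_const r s).prodMk (hasDerivAt_id r)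
  simpa [Function.comp_def] using hf.hasFDerivAt.comp_hasDerivAt r h1

variable {W : Set (ℝ × ℝ)} {f : ℝ × ℝ → F}

lemma diffAt (hW : IsOpen W) (hf : ContDiffOn ℝ ∞ f W) {p : ℝ × ℝ} (hp : p ∈ W) :
    DifferentiableAt ℝ f p :=
  (hf.contDiffAt (hW.mem_nhds hp)).differentiableAt (by simp)

lemma fderivCD (hW : IsOpen W) (hf : ContDiffOn ℝ ∞ f W) :
    ContDiffOn ℝ ∞ (fderiv ℝ f) W :=
  ((contDiffOn_infty_iff_fderiv_of_isOpen hW).1 hf).2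

lemma P1_eq (hW : IsOpen W) (hf : ContDiffOn ℝ ∞ f W) {p : ℝ × ℝ} (hp : p ∈ W) :
    P1 f p = fderiv ℝ f p (1, 0) := (hasDerivAt_slice1 (diffAt hW hf hp)).deriv

lemma P2_eq (hW : IsOpen W) (hf : ContDiffOn ℝ ∞ f W) {p : ℝ × ℝ} (hp : p ∈ W) :
    P2 f p = fderiv ℝ f p (0, 1) := (hasDerivAt_slice2 (diffAt hW hf hp)).deriv

lemma P1_smooth (hW : IsOpen W) (hf : ContDiffOn ℝ ∞ f W) : ContDiffOn ℝ ∞ (P1 f) W :=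
  (((ContinuousLinearMap.apply ℝ F ((1 : ℝ), (0 : ℝ))).contDiff.comp_contDiffOn
    (fderivCD hW hf))).congr fun p hp => P1_eq hW hf hp

lemma P2_smooth (hW : IsOpen W) (hf : ContDiffOn ℝ ∞ f W) : ContDiffOn ℝ ∞ (P2 f) W :=
  (((ContinuousLinearMap.apply ℝ F ((0 : ℝ), (1 : ℝ))).contDiff.comp_contDiffOn
    (fderivCD hW hf))).congr fun p hp => P2_eq hW hf hp

lemma hdP1 (hW : IsOpen W) (hf : ContDiffOn ℝ ∞ f W) {s r : ℝ} (hp : (s, r) ∈ W) :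
    HasDerivAt (fun σ => f (σ, r)) (P1 f (s, r)) s := by
  rw [P1_eq hW hf hp]; exact hasDerivAt_slice1 (diffAt hW hf hp)

lemma hdP2 (hW : IsOpen W) (hf : ContDiffOn ℝ ∞ f W) {s r : ℝ} (hp : (s, r) ∈ W) :
    HasDerivAt (fun ρ => f (s, ρ)) (P2 f (s, r)) r := by
  rw [P2_eq hW hf hp]; exact hasDerivAt_slice2 (diffAt hW hf hp)

/-- Clairaut. -/
lemma clairaut (hW : IsOpen W) (hf : ContDiffOn ℝ ∞ f W) {p : ℝ × ℝ} (hp : p ∈ W) :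
    P1 (P2 f) p = P2 (P1 f) p := by
  obtain ⟨s, r⟩ := p
  have hfd : DifferentiableAt ℝ (fderiv ℝ f) (s, r) := diffAt hW (fderivCD hW hf) hp
  have h1 : HasDerivAt (fun σ => fderiv ℝ f (σ, r)) (fderiv ℝ (fderiv ℝ f) (s, r) (1, 0)) s :=
    hasDerivAt_slice1 hfd
  have h2 : HasDerivAt (fun ρ => fderiv ℝ f (s, ρ)) (fderiv ℝ (fderiv ℝ f) (s, r) (0, 1)) r :=
    hasDerivAt_slice2 hfd
  have e1 : P1 (P2 f) (s, r) = fderiv ℝ (fderiv ℝ f) (s, r) (1, 0) (0, 1) := by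
    have heq : (fun σ => P2 f (σ, r)) =ᶠ[𝓝 s] fun σ => fderiv ℝ f (σ, r) (0, 1) := by
      have hWs : IsOpen {σ : ℝ | (σ, r) ∈ W} := hW.preimage (by fun_prop)
      filter_upwards [hWs.mem_nhds hp] with σ hσ using P2_eq hW hf hσ
    have := ((ContinuousLinearMap.apply ℝ F ((0 : ℝ), (1 : ℝ))).hasFDerivAt.comp_hasDerivAt s h1)
    calc P1 (P2 f) (s, r) = deriv (fun σ => fderiv ℝ f (σ, r) (0, 1)) s := heq.deriv_eq
      _ = fderiv ℝ (fderiv ℝ f) (s, r) (1, 0) (0, 1) := by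
          simpa [Function.comp_def] using this.deriv
  have e2 : P2 (P1 f) (s, r) = fderiv ℝ (fderiv ℝ f) (s, r) (0, 1) (1, 0) := by
    have heq : (fun ρ => P1 f (s, ρ)) =ᶠ[𝓝 r] fun ρ => fderiv ℝ f (s, ρ) (1, 0) := by
      have hWs : IsOpen {ρ : ℝ | (s, ρ) ∈ W} := hW.preimage (by fun_prop)
      filter_upwards [hWs.mem_nhds hp] with ρ hρ using P1_eq hW hf hρ
    have := ((ContinuousLinearMap.apply ℝ F ((1 : ℝ), (0 : ℝ))).hasFDerivAt.comp_hasDerivAt r h2)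
    calc P2 (P1 f) (s, r) = deriv (fun ρ => fderiv ℝ f (s, ρ) (1, 0)) r := heq.deriv_eq
      _ = fderiv ℝ (fderiv ℝ f) (s, r) (0, 1) (1, 0) := by
          simpa [Function.comp_def] using this.deriv
  rw [e1, e2]
  exact (hf.contDiffAt (hW.mem_nhds hp)).isSymmSndFDerivAt (by
    simpa using two_le_inf) _ _

end PD

lemma Dop0 (n : ℤ) (g : ℝ → ℝ) (r : ℝ) :
    Dop n 0 g r = deriv (deriv g) r + ((n : ℝ) - 1) * (Real.cosh r / Real.sinh r) * deriv g r := by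
  simp [Dop]

lemma step2 (n j1 : ℤ) {f : ℝ × ℝ → ℝ} {W : Set (ℝ × ℝ)} (hW : IsOpen W)
    (hf : ContDiffOn ℝ ∞ f W) {s r : ℝ} (hp : (s, r) ∈ W) :
    Gop n j1 (fun σ => Dop n 0 (fun ρ => f (σ, ρ)) r) s
      = Dop n 0 (fun ρ => Gop n j1 (fun σ => f (σ, ρ)) s) r := by
  have h1 : ContDiffOn ℝ ∞ (P1 f) W := P1_smooth hW hf
  have h2 : ContDiffOn ℝ ∞ (P2 f) W := P2_smooth hW hf
  have h22 : ContDiffOn ℝ ∞ (P2 (P2 f)) W := P2_smooth hW h2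
  have h21 : ContDiffOn ℝ ∞ (P2 (P1 f)) W := P2_smooth hW h1
  -- LHS
  have hGfun : (fun σ => Dop n 0 (fun ρ => f (σ, ρ)) r)
      = fun σ => P2 (P2 f) (σ, r)
          + ((n : ℝ) - 1) * (Real.cosh r / Real.sinh r) * P2 f (σ, r) := by
    funext σ; rw [Dop0]; rfl
  have hL : HasDerivAt (fun σ => P2 (P2 f) (σ, r)
        + ((n : ℝ) - 1) * (Real.cosh r / Real.sinh r) * P2 f (σ, r))
      (P1 (P2 (P2 f)) (s, r)
        + ((n : ℝ) - 1) * (Real.cosh r / Real.sinh r) * P1 (P2 f) (s, r)) s :=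
    (hdP1 hW h22 hp).add ((hdP1 hW h2 hp).const_mul _)
  have lhs_eq : Gop n j1 (fun σ => Dop n 0 (fun ρ => f (σ, ρ)) r) s
      = (P1 (P2 (P2 f)) (s, r)
          + ((n : ℝ) - 1) * (Real.cosh r / Real.sinh r) * P1 (P2 f) (s, r))
        + ((n : ℝ) + (j1 : ℝ) - 2) * (Real.cosh s / Real.sinh s)
          * (P2 (P2 f) (s, r)
            + ((n : ℝ) - 1) * (Real.cosh r / Real.sinh r) * P2 f (s, r)) := by
    show deriv (fun σ => Dop n 0 (fun ρ => f (σ, ρ)) r) s + _ = _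
    rw [hGfun, hL.deriv]
  -- RHS
  have hHfun : (fun ρ => Gop n j1 (fun σ => f (σ, ρ)) s)
      = fun ρ => P1 f (s, ρ)
          + ((n : ℝ) + (j1 : ℝ) - 2) * (Real.cosh s / Real.sinh s) * f (s, ρ) := rfl
  have hR1 : HasDerivAt (fun ρ => P1 f (s, ρ)
        + ((n : ℝ) + (j1 : ℝ) - 2) * (Real.cosh s / Real.sinh s) * f (s, ρ))
      (P2 (P1 f) (s, r)
        + ((n : ℝ) + (j1 : ℝ) - 2) * (Real.cosh s / Real.sinh s) * P2 f (s, r)) r :=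
    (hdP2 hW h1 hp).add ((hdP2 hW hf hp).const_mul _)
  have hslice : IsOpen {ρ : ℝ | (s, ρ) ∈ W} := hW.preimage (by fun_prop)
  have hd1 : ∀ ρ ∈ {ρ : ℝ | (s, ρ) ∈ W},
      deriv (fun ρ' => P1 f (s, ρ')
        + ((n : ℝ) + (j1 : ℝ) - 2) * (Real.cosh s / Real.sinh s) * f (s, ρ')) ρ
      = P2 (P1 f) (s, ρ)
        + ((n : ℝ) + (j1 : ℝ) - 2) * (Real.cosh s / Real.sinh s) * P2 f (s, ρ) :=
    fun ρ hρ => ((hdP2 hW h1 hρ).add ((hdP2 hW hf hρ).const_mul _)).deriv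
  have hR2 : HasDerivAt (fun ρ => P2 (P1 f) (s, ρ)
        + ((n : ℝ) + (j1 : ℝ) - 2) * (Real.cosh s / Real.sinh s) * P2 f (s, ρ))
      (P2 (P2 (P1 f)) (s, r)
        + ((n : ℝ) + (j1 : ℝ) - 2) * (Real.cosh s / Real.sinh s) * P2 (P2 f) (s, r)) r :=
    (hdP2 hW h21 hp).add ((hdP2 hW h2 hp).const_mul _)
  have rhs_eq : Dop n 0 (fun ρ => Gop n j1 (fun σ => f (σ, ρ)) s) r
      = (P2 (P2 (P1 f)) (s, r)
          + ((n : ℝ) + (j1 : ℝ) - 2) * (Real.cosh s / Real.sinh s) * P2 (P2 f) (s, r))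
        + ((n : ℝ) - 1) * (Real.cosh r / Real.sinh r)
          * (P2 (P1 f) (s, r)
            + ((n : ℝ) + (j1 : ℝ) - 2) * (Real.cosh s / Real.sinh s) * P2 f (s, r)) := by
    rw [Dop0, hHfun]
    rw [show deriv (deriv (fun ρ => P1 f (s, ρ)
        + ((n : ℝ) + (j1 : ℝ) - 2) * (Real.cosh s / Real.sinh s) * f (s, ρ))) r
      = deriv (fun ρ => P2 (P1 f) (s, ρ)
        + ((n : ℝ) + (j1 : ℝ) - 2) * (Real.cosh s / Real.sinh s) * P2 f (s, ρ)) r from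
      Filter.EventuallyEq.deriv_eq
        (Filter.eventuallyEq_of_mem (hslice.mem_nhds hp) hd1)]
    rw [hR2.deriv, hR1.deriv]
  -- Clairaut
  have hc1 : P1 (P2 f) (s, r) = P2 (P1 f) (s, r) := clairaut hW hf hp
  have hc2 : P1 (P2 (P2 f)) (s, r) = P2 (P2 (P1 f)) (s, r) := by
    rw [clairaut hW h2 hp]
    show deriv (fun ρ => P1 (P2 f) (s, ρ)) r = deriv (fun ρ => P2 (P1 f) (s, ρ)) r
    refine Filter.EventuallyEq.deriv_eq ?_
    filter_upwards [hslice.mem_nhds hp] with ρ hρ using clairaut hW hf hρ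
  rw [lhs_eq, rhs_eq, hc1, hc2]
  ring


lemma Gop_congr {n k : ℤ} {g1 g2 : ℝ → ℝ} {s : ℝ} (h : g1 =ᶠ[𝓝 s] g2) :
    Gop n k g1 s = Gop n k g2 s := by
  show deriv g1 s + _ * g1 s = deriv g2 s + _ * g2 s
  rw [h.deriv_eq, h.self_of_nhds]


/-- The symmetrization step of Lemma `L:Q_m`: if `𝒟_{m,s} U = 𝒟_{0,r} U` on an open
    set `Ω ⊆ (0,∞) × (0,∞)` and `U` is smooth on a neighborhood `W` of `Ω`, then
    `V = Q_{m,s} U` satisfies the symmetric equation `𝒟_{0,s} V = 𝒟_{0,r} V` on `Ω`. -/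
theorem stmt_14 (n : ℤ) (hn : 2 ≤ n) (m : ℕ) (hm : 1 ≤ m)
    (Ω : Set (ℝ × ℝ)) (hΩopen : IsOpen Ω)
    (hΩsub : Ω ⊆ (Set.Ioi (0 : ℝ)) ×ˢ (Set.Ioi (0 : ℝ)))
    (U : ℝ → ℝ → ℝ)
    (W : Set (ℝ × ℝ)) (hWopen : IsOpen W) (hΩW : Ω ⊆ W)
    (hU : ContDiffOn ℝ (⊤ : ℕ∞) (fun p : ℝ × ℝ => U p.1 p.2) W)
    (hPDE : ∀ p ∈ Ω, Dop n (m : ℤ) (fun σ => U σ p.2) p.1 = Dop n 0 (fun ρ => U p.1 ρ) p.2)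
    (V : ℝ → ℝ → ℝ) (hV : ∀ s r : ℝ, V s r = Qop n m (fun σ => U σ r) s) :
    ∀ p ∈ Ω, Dop n 0 (fun σ => V σ p.2) p.1 = Dop n 0 (fun ρ => V p.1 ρ) p.2 := by
  set W' : Set (ℝ × ℝ) := W ∩ (Prod.fst ⁻¹' ({(0 : ℝ)}ᶜ)) with hW'def
  have hW'o : IsOpen W' := hWopen.inter (isOpen_compl_singleton.preimage continuous_fst)
  have hne : ∀ p ∈ W', (p : ℝ × ℝ).1 ≠ 0 := fun p hp => hp.2
  have hΩW' : Ω ⊆ W' := fun p hp =>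
    ⟨hΩW hp, ne_of_gt (Set.mem_Ioi.mp (hΩsub hp).1)⟩
  have hcoth : ContDiffOn ℝ ∞ (fun p : ℝ × ℝ => Real.cosh p.1 / Real.sinh p.1) W' :=
    ((Real.contDiff_cosh.comp contDiff_fst).contDiffOn.div
      (Real.contDiff_sinh.comp contDiff_fst).contDiffOn
      (fun p hp => sh_ne (hne p hp)))
  have key : ∀ j : ℕ, ∀ F : ℝ → ℝ → ℝ,
      ContDiffOn ℝ ∞ (fun p : ℝ × ℝ => F p.1 p.2) W' →
      (∀ p ∈ Ω, Dop n (j : ℤ) (fun σ => F σ p.2) p.1 = Dop n 0 (fun ρ => F p.1 ρ) p.2) →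
      ∀ p ∈ Ω, Dop n 0 (fun σ => Qop n j (fun σ' => F σ' p.2) σ) p.1
        = Dop n 0 (fun ρ => Qop n j (fun σ' => F σ' ρ) p.1) p.2 := by
    intro j
    induction j with
    | zero =>
      intro F hFs hFp p hp
      simpa [Qop] using hFp p hp
    | succ j ih =>
      intro F hFs hFp
      have hFp' : ∀ p ∈ Ω, Dop n ((j : ℤ) + 1) (fun σ => F σ p.2) p.1
          = Dop n 0 (fun ρ => F p.1 ρ) p.2 := by
        intro p hp
        have := hFp p hp
        push_cast at this
        exact this
      set F' : ℝ → ℝ → ℝ := fun s r => Gop n ((j : ℤ) + 1) (fun σ => F σ r) s with hF'def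
      have hF's : ContDiffOn ℝ ∞ (fun p : ℝ × ℝ => F' p.1 p.2) W' := by
        have heq : (fun p : ℝ × ℝ => F' p.1 p.2)
            = fun p : ℝ × ℝ => P1 (fun q : ℝ × ℝ => F q.1 q.2) p
              + ((n : ℝ) + (((j : ℤ) + 1 : ℤ) : ℝ) - 2)
                * (Real.cosh p.1 / Real.sinh p.1) * F p.1 p.2 := by
          funext p; rfl
        rw [heq]
        exact (P1_smooth hW'o hFs).add ((contDiffOn_const.mul hcoth).mul hFs)
      have hF'p : ∀ p ∈ Ω, Dop n (j : ℤ) (fun σ => F' σ p.2) p.1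
          = Dop n 0 (fun ρ => F' p.1 ρ) p.2 := by
        rintro ⟨s, r⟩ hp
        have hS0 : ∀ σ ∈ {σ : ℝ | (σ, r) ∈ W'}, σ ≠ 0 := fun σ hσ => hne _ hσ
        have hSo : IsOpen {σ : ℝ | (σ, r) ∈ W'} := hW'o.preimage (by fun_prop)
        have hfS : ContDiffOn ℝ ∞ (fun σ => F σ r) {σ : ℝ | (σ, r) ∈ W'} :=
          hFs.comp ((contDiff_id.prodMk contDiff_const).contDiffOn) (fun σ hσ => hσ)
        have hcomm := comm1 n ((j : ℤ) + 1) hSo hS0 hfS (hΩW' hp)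
        rw [show (j : ℤ) + 1 - 1 = (j : ℤ) by ring] at hcomm
        have hev : Dop n ((j : ℤ) + 1) (fun σ => F σ r)
            =ᶠ[𝓝 s] fun σ => Dop n 0 (fun ρ => F σ ρ) r := by
          have hΩs : IsOpen {σ : ℝ | (σ, r) ∈ Ω} := hΩopen.preimage (by fun_prop)
          filter_upwards [hΩs.mem_nhds hp] with σ hσ using hFp' (σ, r) hσ
        calc Dop n (j : ℤ) (fun σ => F' σ r) s
            = Gop n ((j : ℤ) + 1) (Dop n ((j : ℤ) + 1) (fun σ => F σ r)) s := hcomm.symm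
          _ = Gop n ((j : ℤ) + 1) (fun σ => Dop n 0 (fun ρ => F σ ρ) r) s := Gop_congr hev
          _ = Dop n 0 (fun ρ => F' s ρ) r :=
              step2 n ((j : ℤ) + 1) hW'o hFs (hΩW' hp)
      intro p hp
      exact ih F' hF's hF'p p hp
  intro p hp
  have h1 : (fun σ => V σ p.2) = fun σ => Qop n m (fun σ' => U σ' p.2) σ :=
    funext fun σ => hV σ p.2
  have h2 : (fun ρ => V p.1 ρ) = fun ρ => Qop n m (fun σ' => U σ' ρ) p.1 :=
    funext fun ρ => hV p.1 ρ
  rw [h1, h2]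
  exact key m U ((hU.of_le (by simp)).mono Set.inter_subset_left) hPDE p hp
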